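/- There is no σ-invariant polynomial p ∈ ℂ[x₀,x₁,x₂] such that eval at (0, y, z) of p equals y for all y, z ∈ ℂ. In other words, the function x₁, which is invariant for the induced ℂ⁺-action on the hyperplane x₀ = 0 (where the action is x₁ ↦ x₁, x₂ ↦ x₂ + 2t·x₁), does not extend to a σ-invariant polynomial on ℂ³. -/
import Mathlib


open MvPolynomial

/-- The `ℂ`-algebra endomorphism of `ℂ[x₀,x₁,x₂]` given by
`σ_t(x₀) = x₀`, `σ_t(x₁) = x₁ + t·x₀`, `σ_t(x₂) = x₂ + 2t·x₁ + t²·x₀`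
(the `ℂ⁺`-action on `Sym²(ℂ²)`). -/
noncomputable def sigma (t : ℂ) :
    MvPolynomial (Fin 3) ℂ →ₐ[ℂ] MvPolynomial (Fin 3) ℂ :=
  aeval ![X 0, X 1 + C t * X 0, X 2 + C (2 * t) * X 1 + C (t ^ 2) * X 0]

lemma eval_sigma (t a y z : ℂ) (p : MvPolynomial (Fin 3) ℂ) :
    eval ![a, y, z] (sigma t p) = eval ![a, y + t * a, z + 2 * t * y + t ^ 2 * a] p := by
  have h := comp_aeval_apply (f := ![X 0, X 1 + C t * X 0, X 2 + C (2 * t) * X 1 + C (t ^ 2) * X 0])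
    (aeval (R := ℂ) ![a, y, z]) p
  rw [sigma]
  have ha : ∀ w : Fin 3 → ℂ, ∀ q : MvPolynomial (Fin 3) ℂ, aeval (R := ℂ) w q = eval w q := by
    intro w q; rw [← coe_aeval_eq_eval]; rfl
  rw [← ha, h, ha]
  have hw : (fun i => (aeval ![a, y, z])
      (![X 0, X 1 + C t * X 0, X 2 + C (2 * t) * X 1 + C (t ^ 2) * X 0] i))
      = ![a, y + t * a, z + 2 * t * y + t ^ 2 * a] := by
    funext i
    fin_cases i <;> simp
  rw [hw]

/-- evaluation on the line `(a, c, 0)` as a one-variable polynomial in `a` -/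
noncomputable def lineEval (c : ℂ) : MvPolynomial (Fin 3) ℂ →ₐ[ℂ] Polynomial ℂ :=
  aeval ![Polynomial.X, Polynomial.C c, 0]

lemma lineEval_eval (c a : ℂ) (p : MvPolynomial (Fin 3) ℂ) :
    Polynomial.eval a (lineEval c p) = eval ![a, c, 0] p := by
  have h := comp_aeval_apply (f := ![Polynomial.X, Polynomial.C c, 0])
    (Polynomial.aeval (R := ℂ) a) p
  rw [lineEval, ← Polynomial.coe_aeval_eq_eval, h]
  have ha : ∀ w : Fin 3 → ℂ, ∀ q : MvPolynomial (Fin 3) ℂ, aeval (R := ℂ) w q = eval w q := by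
    intro w q; rw [← coe_aeval_eq_eval]; rfl
  rw [ha]
  have hw : (fun i => (Polynomial.aeval a) (![Polynomial.X, Polynomial.C c, (0:Polynomial ℂ)] i))
      = ![a, c, 0] := by
    funext i
    fin_cases i <;> simp
  rw [hw]

/-- There is no `σ`-invariant polynomial `p ∈ ℂ[x₀,x₁,x₂]` whose value at `(0, y, z)`
is `y` for all `y, z ∈ ℂ`: the invariant function `x₁` of the induced `ℂ⁺`-action on
the hyperplane `x₀ = 0` does not extend to a `σ`-invariant polynomial on `ℂ³`. -/
theorem no_invariant_extension :
    ¬ ∃ p : MvPolynomial (Fin 3) ℂ,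
        (∀ t : ℂ, sigma t p = p) ∧ ∀ y z : ℂ, eval ![(0 : ℂ), y, z] p = y := by
  rintro ⟨p, hp, hval⟩
  -- invariance at points
  have key : ∀ t a y z : ℂ,
      eval ![a, y + t * a, z + 2 * t * y + t ^ 2 * a] p = eval ![a, y, z] p := by
    intro t a y z
    rw [← eval_sigma, hp t]
  -- for a ≠ 0, eval (a, -1, 0) = eval (a, 1, 0), using t = -2/a
  have key2 : ∀ a : ℂ, a ≠ 0 → eval ![a, (-1 : ℂ), 0] p = eval ![a, 1, 0] p := by
    intro a ha
    have h := key (-2 / a) a 1 0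
    have h1 : (1 : ℂ) + (-2 / a) * a = -1 := by field_simp; ring
    have h2 : (0 : ℂ) + 2 * (-2 / a) * 1 + (-2 / a) ^ 2 * a = 0 := by field_simp; ring
    rwa [h1, h2] at h
  -- compare the two one-variable polynomials
  have hpolys : lineEval (-1) p = lineEval 1 p := by
    apply Polynomial.eq_of_infinite_eval_eq
    apply Set.Infinite.mono (s := {x : ℂ | x ≠ 0})
    · intro a ha
      simp only [Set.mem_setOf_eq] at ha ⊢
      rw [lineEval_eval, lineEval_eval]
      exact key2 a ha
    · exact Set.Finite.infinite_compl (Set.finite_singleton 0)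
  have h0 := congrArg (Polynomial.eval 0) hpolys
  rw [lineEval_eval, lineEval_eval, hval (-1) 0, hval 1 0] at h0
  exact absurd h0 (by norm_num)
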